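/- Let X be a subshift over a finite alphabet Λ. For every ξ ∈ Ω_X one has: (i) 1 ∈ ξ; (ii) ξ is convex: whenever g, h ∈ ξ and k ∈ 𝔽 satisfies |g⁻¹h| = |g⁻¹k| + |k⁻¹h|, then k ∈ ξ; (iii) for every g ∈ ξ there exists a unique letter a ∈ Λ such that ga ∈ ξ; (iv) if g ∈ ξ and α is a finite word with gα ∈ ξ, then α lies in the language L_X; (v) every element of ξ is of the form αβ⁻¹ with α, β ∈ 𝔽₊. -/

import Mathlib

open scoped Classical

namespace SubshiftPaper

variable {Λ : Type}

/-- The left shift on infinite words. -/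
def shiftMap (x : ℕ → Λ) : ℕ → Λ := fun n => x (n + 1)

/-- Concatenation of a finite word with an infinite word. -/
def cat (α : List Λ) (y : ℕ → Λ) : ℕ → Λ := fun n => α.getD n (y (n - α.length))

/-- `α` is a prefix of the infinite word `x`. -/
def Pref (α : List Λ) (x : ℕ → Λ) : Prop := ∀ (i : ℕ) (h : i < α.length), x i = α[i]

/-- The tail of `x` after `n` letters. -/
def tail (x : ℕ → Λ) (n : ℕ) : ℕ → Λ := fun i => x (n + i)

/-- `α` occurs in `x` at position `n`. -/
def OccursAt (α : List Λ) (x : ℕ → Λ) (n : ℕ) : Prop :=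
  ∀ (i : ℕ) (h : i < α.length), x (n + i) = α[i]

/-- `α` occurs in `x` (as a contiguous block of letters). -/
def Occurs (α : List Λ) (x : ℕ → Λ) : Prop := ∃ n, OccursAt α x n

/-- `X` is a subshift: a nonempty closed shift-invariant subset. -/
def IsSubshift [TopologicalSpace Λ] (X : Set (ℕ → Λ)) : Prop :=
  X.Nonempty ∧ IsClosed X ∧ ∀ x ∈ X, shiftMap x ∈ X

/-- The set of infinite words avoiding all words in `F`. -/
def ForbidSpace (F : Set (List Λ)) : Set (ℕ → Λ) := {x | ∀ α ∈ F, ¬ Occurs α x}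

/-- `X` is a subshift of finite type. -/
def IsSFT (X : Set (ℕ → Λ)) : Prop := ∃ F : Set (List Λ), F.Finite ∧ X = ForbidSpace F

/-- The follower set of a finite word. -/
def follower (X : Set (ℕ → Λ)) (α : List Λ) : Set (ℕ → Λ) := {y | y ∈ X ∧ cat α y ∈ X}

/-- The cylinder of a finite word. -/
def cylinder (X : Set (ℕ → Λ)) (α : List Λ) : Set (ℕ → Λ) := {x | x ∈ X ∧ Pref α x}

/-- The language of `X`. -/
def Language (X : Set (ℕ → Λ)) : Set (List Λ) := {α | ∃ x ∈ X, Occurs α x}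

/-- The embedding of finite words into the free group. -/
def wd (α : List Λ) : FreeGroup Λ := (α.map FreeGroup.of).prod

/-- Indicator function of a set of group elements. -/
noncomputable def chi (s : Set (FreeGroup Λ)) : FreeGroup Λ → Bool :=
  fun g => if g ∈ s then true else false

/-- The set `ξ_x ⊆ 𝔽`. -/
def xiSet [DecidableEq Λ] (X : Set (ℕ → Λ)) (x : ℕ → Λ) : Set (FreeGroup Λ) :=
  {g | ∃ α β : List Λ, g = wd α * (wd β)⁻¹ ∧
        FreeGroup.norm g = α.length + β.length ∧
        Pref α x ∧ tail x α.length ∈ follower X α ∩ follower X β}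

/-- `ξ_x` as an element of `2^𝔽`. -/
noncomputable def xiB [DecidableEq Λ] (X : Set (ℕ → Λ)) (x : ℕ → Λ) : FreeGroup Λ → Bool :=
  chi (xiSet X x)

/-- The spectrum `Ω_X`: the closure of `{ξ_x : x ∈ X}` in `2^𝔽`. -/
noncomputable def Omega [DecidableEq Λ] (X : Set (ℕ → Λ)) : Set (FreeGroup Λ → Bool) :=
  closure ((fun x => xiB X x) '' X)

/-- Left translation of an element of `2^𝔽`. -/
def translate (g : FreeGroup Λ) (ξ : FreeGroup Λ → Bool) : FreeGroup Λ → Bool :=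
  fun h => ξ (g⁻¹ * h)

/-- `x` is the stem of `ξ`: `ξ ∩ 𝔽₊` is exactly the set of prefixes of `x`. -/
def IsStem (ξ : FreeGroup Λ → Bool) (x : ℕ → Λ) : Prop :=
  {g | ξ g = true} ∩ {g | ∃ α : List Λ, g = wd α} =
    {g | ∃ α : List Λ, g = wd α ∧ Pref α x}

/-- `x` is the stem of `ξ` at `g`: `ξ ∩ g𝔽₊ = {gα : α is a prefix of x}`. -/
def IsStemAt (ξ : FreeGroup Λ → Bool) (g : FreeGroup Λ) (x : ℕ → Λ) : Prop :=
  {h | ξ h = true} ∩ {h | ∃ α : List Λ, h = g * wd α} =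
    {h | ∃ α : List Λ, h = g * wd α ∧ Pref α x}

/-- The orbit of `ξ` under the spectral partial action. -/
def Orbit (ξ : FreeGroup Λ → Bool) : Set (FreeGroup Λ → Bool) :=
  {η | ∃ g : FreeGroup Λ, ξ g⁻¹ = true ∧ η = translate g ξ}

/-- Topological freeness of the spectral partial action. -/
noncomputable def TopFree [DecidableEq Λ] (X : Set (ℕ → Λ)) : Prop :=
  ∀ g : FreeGroup Λ, g ≠ 1 →
    ∀ U : Set (FreeGroup Λ → Bool), IsOpen U →
      (U ∩ Omega X ⊆ {ξ | ξ g⁻¹ = true ∧ translate g ξ = ξ}) → U ∩ Omega X = ∅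

/-- The periodic infinite word `γ^∞`. -/
noncomputable def perInf [Nonempty Λ] (γ : List Λ) : ℕ → Λ :=
  fun n => γ.getD (n % γ.length) (Classical.arbitrary Λ)

/-- `n`-fold concatenation of a finite word with itself. -/
def rep : ℕ → List Λ → List Λ
  | 0, _ => []
  | n + 1, γ => γ ++ rep n γ

/-- `γ` is a circuit relative to `X`. -/
noncomputable def IsCircuit [Nonempty Λ] (X : Set (ℕ → Λ)) (γ : List Λ) : Prop :=
  γ ≠ [] ∧ perInf γ ∈ X

/-- `y` is an exit for the circuit `γ`. -/
noncomputable def IsExit [Nonempty Λ] (X : Set (ℕ → Λ)) (γ : List Λ) (y : ℕ → Λ) : Prop :=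
  y ≠ perInf γ ∧ cat γ y ∈ X

/-- `z` is a strong exit for the circuit `γ`. -/
noncomputable def IsStrongExit [Nonempty Λ] (X : Set (ℕ → Λ)) (γ : List Λ) (z : ℕ → Λ) : Prop :=
  z ≠ perInf γ ∧ ∀ n : ℕ, cat (rep n γ) z ∈ X

/-- The sets `X_g` of the standard partial action. -/
def Xg [DecidableEq Λ] (X : Set (ℕ → Λ)) (g : FreeGroup Λ) : Set (ℕ → Λ) :=
  {x | ∃ α β : List Λ, g = wd α * (wd β)⁻¹ ∧
        FreeGroup.norm g = α.length + β.length ∧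
        ∃ y ∈ follower X α ∩ follower X β, x = cat α y}

/-- `x` is a fixed point for `θ_g`. -/
def IsThetaFixed [DecidableEq Λ] (X : Set (ℕ → Λ)) (g : FreeGroup Λ) (x : ℕ → Λ) : Prop :=
  ∃ α β : List Λ, g = wd α * (wd β)⁻¹ ∧
    FreeGroup.norm g = α.length + β.length ∧
    ∃ y ∈ follower X α ∩ follower X β, x = cat β y ∧ cat α y = x

/-- `x` may be collectively reached from the finite set `B`. -/
def CollReached (X : Set (ℕ → Λ)) (B : Finset (List Λ)) (x : ℕ → Λ) : Prop :=
  ∃ α γ : List Λ, Pref α x ∧ ∀ β ∈ B, cat (β ++ γ) (tail x α.length) ∈ X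

/-- `X` is collectively cofinal. -/
def CollCofinal (X : Set (ℕ → Λ)) : Prop :=
  ∀ B : Finset (List Λ), ↑B ⊆ Language X → (⋂ β ∈ B, follower X β).Nonempty →
    ∀ x ∈ X, CollReached X B x

/-- `X` is strongly cofinal. -/
def StrongCofinal (X : Set (ℕ → Λ)) : Prop :=
  ∀ β ∈ Language X, ∃ M : ℕ, ∀ x ∈ X, ∃ α γ : List Λ, Pref α x ∧
    cat (β ++ γ) (tail x α.length) ∈ X ∧ α.length + γ.length ≤ M

/-- The even shift. -/
def evenShift : Set (ℕ → Fin 2) :=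
  ForbidSpace {w | ∃ n : ℕ, w = 0 :: (List.replicate (2 * n + 1) 1 ++ [0])}

/-!
The five properties of `ξ ∈ Ω_X` each involve only finitely many coordinates of `ξ` (for (iii)
this uses that `Λ` is finite), so they pass from the sets `ξ_x`, `x ∈ X`, to their closure.

In reduced words, `ξ_x` consists of the `αβ⁻¹` with `α` a prefix of `x` and `β σ^|α|(x) ∈ X`.
This set is closed under taking prefixes of reduced words, i.e. it is a subtree of the Cayley
tree of `𝔽` containing `1`, hence convex. Above such an element `g = αβ⁻¹`, the elements `gγ`
(`γ ∈ 𝔽₊`) of `ξ_x` are exactly those for which `γ` is a prefix of the infinite word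
`β σ^|α|(x) ∈ X`: either `γ` retraces part of `β`, or it runs through all of `β` and then along
`x`, and any other `γ` leaves a reduced word with a positive letter after a negative one. This
gives (iii) and (iv).
-/

section FreeGroupTree

open FreeGroup

theorem _root_.List.exists_common_prefix {σ : Type*} : ∀ l₁ l₂ : List σ,
    ∃ p u v, l₁ = p ++ u ∧ l₂ = p ++ v ∧ ∀ a ∈ u.head?, ∀ b ∈ v.head?, a ≠ b
  | [], l₂ => ⟨[], [], l₂, rfl, rfl, by simp⟩
  | l₁, [] => ⟨[], l₁, [], rfl, rfl, by simp⟩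
  | a :: l₁, b :: l₂ => by
    by_cases hab : a = b
    · obtain ⟨p, u, v, rfl, rfl, h⟩ := List.exists_common_prefix l₁ l₂
      exact ⟨a :: p, u, v, rfl, by rw [hab]; rfl, h⟩
    · exact ⟨[], a :: l₁, b :: l₂, rfl, rfl, by simpa using hab⟩

theorem _root_.List.prefix_append_cases {σ : Type*} {p l₁ l₂ : List σ} (h : p <+: l₁ ++ l₂) :
    p <+: l₁ ∨ ∃ q, q <+: l₂ ∧ p = l₁ ++ q := by
  obtain ⟨r, hr⟩ := h
  rcases List.append_eq_append_iff.1 hr with ⟨a, rfl, -⟩ | ⟨c, rfl, hc⟩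
  · exact Or.inl (List.prefix_append _ _)
  · exact Or.inr ⟨c, ⟨r, hc.symm⟩, rfl⟩

variable {α : Type*} [DecidableEq α]

theorem _root_.FreeGroup.IsReduced.invRev {w : List (α × Bool)} (h : IsReduced w) :
    IsReduced (invRev w) := by
  rw [isReduced_iff_reduce_eq] at h ⊢
  rw [reduce_invRev, h]

theorem _root_.FreeGroup.toWord_mk_of_isReduced {w : List (α × Bool)} (h : IsReduced w) :
    (mk w).toWord = w := by
  rw [toWord_mk, h.reduce_eq]

theorem _root_.FreeGroup.toWord_mk_of_prefix {w : List (α × Bool)} {g : FreeGroup α}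
    (h : w <+: g.toWord) : (mk w).toWord = w :=
  toWord_mk_of_isReduced (isReduced_toWord.infix h.isInfix)

theorem _root_.FreeGroup.toWord_mul_of_norm_eq_add {u v : FreeGroup α}
    (h : (u * v).norm = u.norm + v.norm) : (u * v).toWord = u.toWord ++ v.toWord :=
  (toWord_mul_sublist u v).eq_of_length (by simpa [FreeGroup.norm] using h)

theorem _root_.FreeGroup.toWord_inv_mul_of_head_ne {g h : FreeGroup α} {p u v : List (α × Bool)}
    (hg : g.toWord = p ++ u) (hh : h.toWord = p ++ v)
    (huv : ∀ a ∈ u.head?, ∀ b ∈ v.head?, a ≠ b) : (g⁻¹ * h).toWord = invRev u ++ v := by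
  have hu : IsReduced u := isReduced_toWord.infix (hg ▸ List.suffix_append p u).isInfix
  have hv : IsReduced v := isReduced_toWord.infix (hh ▸ List.suffix_append p v).isInfix
  have hred : IsReduced (invRev u ++ v) := by
    refine List.isChain_append.2 ⟨hu.invRev, hv, ?_⟩
    cases u with
    | nil => simp [invRev]
    | cons a u =>
      intro a' ha' b hb hab
      simp only [invRev, List.map_cons, List.reverse_cons, List.getLast?_append,
        List.getLast?_singleton, Option.some_or, Option.mem_def, Option.some.injEq] at ha'
      subst ha'
      have := huv a rfl b hb
      grind
  rw [← toWord_mk_of_isReduced hred, ← mk_toWord (x := g), ← mk_toWord (x := h), hg, hh,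
    ← mul_mk, ← mul_mk, ← mul_mk, ← inv_mk]
  group

/-- In the Cayley tree of `FreeGroup α`, the geodesic from `g` to `h` lies in the union of the
geodesics from `1` to `g` and from `1` to `h`. -/
theorem _root_.FreeGroup.toWord_prefix_or_prefix_of_norm_eq_add {g h k : FreeGroup α}
    (hk : (g⁻¹ * h).norm = (g⁻¹ * k).norm + (k⁻¹ * h).norm) :
    k.toWord <+: g.toWord ∨ k.toWord <+: h.toWord := by
  obtain ⟨p, u, v, hgp, hhp, huv⟩ := List.exists_common_prefix g.toWord h.toWord
  have hsplit : invRev u ++ v = (g⁻¹ * k).toWord ++ (k⁻¹ * h).toWord := by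
    have hmul : g⁻¹ * k * (k⁻¹ * h) = g⁻¹ * h := by group
    rw [← toWord_inv_mul_of_head_ne hgp hhp huv, ← hmul, toWord_mul_of_norm_eq_add (hmul ▸ hk)]
  obtain ⟨w, hw⟩ : ∃ w, (g⁻¹ * k).toWord = w := ⟨_, rfl⟩
  have hk' : k = mk p * mk u * mk w := by
    rw [mul_mk, ← hgp, mk_toWord, ← hw, mk_toWord]
    group
  suffices ∃ w', k = mk w' ∧ (w' <+: g.toWord ∨ w' <+: h.toWord) by
    obtain ⟨w', rfl, hw' | hw'⟩ := this
    · exact .inl (by rwa [toWord_mk_of_prefix hw'])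
    · exact .inr (by rwa [toWord_mk_of_prefix hw'])
  rw [hw] at hsplit
  rcases List.prefix_append_cases ⟨_, hsplit.symm⟩ with ⟨r, hr⟩ | ⟨q, ⟨r, hr⟩, hq⟩
  · have hur : u = invRev r ++ invRev w := by
      rw [← invRev_append, hr, invRev_invRev]
    refine ⟨p ++ invRev r, ?_, .inl ⟨invRev w, by rw [hgp, hur, List.append_assoc]⟩⟩
    rw [hk', hur, ← mul_mk, ← mul_mk, ← inv_mk, ← inv_mk]
    group
  · refine ⟨p ++ q, ?_, .inr ⟨r, by rw [hhp, ← hr, List.append_assoc]⟩⟩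
    rw [hk', hq, ← mul_mk, ← mul_mk, ← inv_mk]
    group

def _root_.FreeGroup.IsPrefixClosed (S : Set (FreeGroup α)) : Prop :=
  ∀ g ∈ S, ∀ w, w <+: g.toWord → mk w ∈ S

theorem _root_.FreeGroup.IsPrefixClosed.mem_of_norm_eq_add {S : Set (FreeGroup α)}
    (hS : IsPrefixClosed S) {g h k : FreeGroup α} (hg : g ∈ S) (hh : h ∈ S)
    (hk : (g⁻¹ * h).norm = (g⁻¹ * k).norm + (k⁻¹ * h).norm) : k ∈ S := by
  rw [← mk_toWord (x := k)]
  rcases toWord_prefix_or_prefix_of_norm_eq_add hk with hw | hw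
  exacts [hS g hg _ hw, hS h hh _ hw]

end FreeGroupTree

section Words

open FreeGroup

def posWord (α : List Λ) : List (Λ × Bool) := α.map (·, true)

theorem isReduced_posWord (α : List Λ) : IsReduced (posWord α) := by
  rw [FreeGroup.IsReduced, posWord, List.isChain_map]
  exact (List.pairwise_of_forall (by simp)).isChain

theorem wd_eq_mk (α : List Λ) : wd α = mk (posWord α) := by
  induction α with
  | nil => rfl
  | cons a α ih =>
    rw [wd, List.map_cons, List.prod_cons, ← wd, ih]
    rfl

theorem wd_append (α β : List Λ) : wd (α ++ β) = wd α * wd β := by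
  simp [wd]

theorem wd_mul_inv_wd (α β : List Λ) :
    wd α * (wd β)⁻¹ = mk (posWord α ++ invRev (posWord β)) := by
  rw [wd_eq_mk, wd_eq_mk, inv_mk, mul_mk]

theorem toWord_eq_posWord_append_invRev_iff [DecidableEq Λ] {g : FreeGroup Λ} {α β : List Λ} :
    g.toWord = posWord α ++ invRev (posWord β) ↔
      g = wd α * (wd β)⁻¹ ∧ g.norm = α.length + β.length := by
  constructor
  · intro h
    refine ⟨by rw [wd_mul_inv_wd, ← h, mk_toWord], ?_⟩
    simp [FreeGroup.norm, h, posWord, invRev_length]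
  · rintro ⟨rfl, hn⟩
    rw [wd_mul_inv_wd] at hn ⊢
    rw [toWord_mk]
    refine reduce.red.sublist.eq_of_length ?_
    simpa [FreeGroup.norm, posWord, invRev_length] using hn

theorem posWord_append_invRev_inj {α β α' β' : List Λ}
    (h : posWord α ++ invRev (posWord β) = posWord α' ++ invRev (posWord β')) :
    α = α' ∧ β = β' := by
  have hpos := congrArg (List.filter (·.2)) h
  have hneg := congrArg (List.filter (!·.2)) h
  simp [posWord, invRev, List.filter_map, List.filter_reverse, Function.comp_def] at hpos hneg
  exact ⟨List.map_injective_iff.2 (Prod.mk_left_injective true) hpos,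
    List.map_injective_iff.2 (Prod.mk_left_injective false) hneg⟩

theorem pairwise_posWord_append_invRev (α β : List Λ) :
    (posWord α ++ invRev (posWord β)).Pairwise (fun p q => q.2 ≤ p.2) := by
  simp [List.pairwise_append, posWord, invRev, List.pairwise_map, List.pairwise_reverse,
    List.pairwise_of_forall]

theorem posWord_append_invRev_append_posWord_ne {α β γ : List Λ} (hβ : β ≠ []) (hγ : γ ≠ [])
    (α' β' : List Λ) :
    posWord α ++ invRev (posWord β) ++ posWord γ ≠ posWord α' ++ invRev (posWord β') := by
  intro h
  have hsorted := pairwise_posWord_append_invRev α' β'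
  rw [← h, List.pairwise_append] at hsorted
  obtain ⟨b, hb⟩ := List.exists_mem_of_ne_nil β hβ
  obtain ⟨d, hd⟩ := List.exists_mem_of_ne_nil γ hγ
  exact absurd (hsorted.2.2 (b, false) (by simp [invRev, posWord, hb]) (d, true)
    (by simp [posWord, hd])) (by simp)

theorem isReduced_posWord_append_invRev_append_posWord {α β γ : List Λ}
    (h : IsReduced (posWord α ++ invRev (posWord β)))
    (hβγ : ∀ b ∈ β.head?, ∀ d ∈ γ.head?, b ≠ d) :
    IsReduced (posWord α ++ invRev (posWord β) ++ posWord γ) := by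
  refine List.isChain_append.2 ⟨h, isReduced_posWord γ, ?_⟩
  intro p hp q hq
  cases γ with
  | nil => simp [posWord] at hq
  | cons d γ =>
    cases β with
    | nil =>
      simp only [posWord, invRev, List.map_nil, List.reverse_nil, List.append_nil,
        List.getLast?_map, Option.mem_def, Option.map_eq_some_iff, List.map_cons,
        List.head?_cons, Option.some.injEq] at hp hq
      obtain ⟨a, -, rfl⟩ := hp
      simp [← hq]
    | cons b β =>
      simp [posWord, invRev] at hp hq
      subst hp hq
      simpa using hβγ b rfl d rfl

end Words

section InfiniteWords

variable {X : Set (ℕ → Λ)}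

theorem cat_apply (α : List Λ) (y : ℕ → Λ) (n : ℕ) :
    cat α y n = if h : n < α.length then α[n] else y (n - α.length) := by
  unfold cat
  split_ifs with h
  · exact List.getD_eq_getElem _ _ h
  · exact List.getD_eq_default _ _ (not_lt.1 h)

theorem cat_nil (y : ℕ → Λ) : cat [] y = y := by
  ext n; simp [cat_apply]

theorem cat_append (α β : List Λ) (y : ℕ → Λ) : cat (α ++ β) y = cat α (cat β y) := by
  ext n
  simp only [cat_apply, List.length_append, List.getElem_append]
  split_ifs <;> first | rfl | omega | (congr 1; omega)

theorem tail_cat (α : List Λ) (y : ℕ → Λ) : tail (cat α y) α.length = y := by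
  ext n; simp [tail, cat_apply]

theorem pref_append_iff {α δ : List Λ} {x : ℕ → Λ} :
    Pref (α ++ δ) x ↔ Pref α x ∧ Pref δ (tail x α.length) := by
  simp only [Pref, tail, List.length_append, List.getElem_append]
  refine ⟨fun h => ⟨fun i hi => by simpa [hi] using h i (by omega),
    fun i hi => by simpa using h (α.length + i) (by omega)⟩, fun ⟨h₁, h₂⟩ i hi => ?_⟩
  split_ifs with hiα
  · exact h₁ i hiα
  · simpa [show α.length + (i - α.length) = i by omega] using h₂ (i - α.length) (by omega)

theorem Pref.cat_tail {α : List Λ} {x : ℕ → Λ} (h : Pref α x) : cat α (tail x α.length) = x := by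
  ext n
  simp only [cat_apply, tail]
  split_ifs with hn
  · exact (h n hn).symm
  · congr 1; omega

theorem pref_nil (x : ℕ → Λ) : Pref [] x := fun _ h => absurd h (Nat.not_lt_zero _)

theorem pref_cat (α : List Λ) (y : ℕ → Λ) : Pref α (cat α y) := fun i hi => by
  simp [cat_apply, hi]

theorem pref_append_cat_iff {α δ : List Λ} {y : ℕ → Λ} : Pref (α ++ δ) (cat α y) ↔ Pref δ y := by
  rw [pref_append_iff, tail_cat, and_iff_right (pref_cat α y)]

theorem tail_mem (hS : ∀ x ∈ X, shiftMap x ∈ X) {x : ℕ → Λ} (hx : x ∈ X) (n : ℕ) :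
    tail x n ∈ X := by
  induction n with
  | zero => rwa [show tail x 0 = x from funext fun i => congrArg x (Nat.zero_add i)]
  | succ n ih =>
    have hshift : tail x (n + 1) = shiftMap (tail x n) := by
      ext i; simp only [tail, shiftMap]; congr 1; omega
    exact hshift ▸ hS _ ih

theorem cat_mem_of_suffix (hS : ∀ x ∈ X, shiftMap x ∈ X) {β t : List Λ} {y : ℕ → Λ}
    (hβ : cat β y ∈ X) (ht : t <:+ β) : cat t y ∈ X := by
  obtain ⟨s, rfl⟩ := ht
  rw [cat_append] at hβ
  simpa [tail_cat] using tail_mem hS hβ s.length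

theorem mem_language_of_pref {γ : List Λ} {z : ℕ → Λ} (hz : z ∈ X) (hγ : Pref γ z) :
    γ ∈ Language X :=
  ⟨z, hz, 0, fun i hi => by simpa using hγ i hi⟩

end InfiniteWords

section XiSet

open FreeGroup

variable [DecidableEq Λ] {X : Set (ℕ → Λ)} {x : ℕ → Λ}

theorem mem_xiSet_iff (hS : ∀ x ∈ X, shiftMap x ∈ X) (hx : x ∈ X) {g : FreeGroup Λ} :
    g ∈ xiSet X x ↔ ∃ α β, g.toWord = posWord α ++ invRev (posWord β) ∧
      Pref α x ∧ cat β (tail x α.length) ∈ X := by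
  simp only [xiSet, follower, Set.mem_ofPred_eq, Set.mem_inter_iff,
    toWord_eq_posWord_append_invRev_iff, and_assoc]
  refine exists₂_congr fun α β => and_congr_right fun _ => and_congr_right fun _ =>
    and_congr_right fun hα => ?_
  simp [hα.cat_tail, hx, tail_mem hS hx]

theorem one_mem_xiSet (hS : ∀ x ∈ X, shiftMap x ∈ X) (hx : x ∈ X) : 1 ∈ xiSet X x :=
  (mem_xiSet_iff hS hx).2 ⟨[], [], by simp [posWord, invRev], pref_nil x,
    by simpa [cat_nil] using tail_mem hS hx 0⟩

theorem xiSet_isPrefixClosed (hS : ∀ x ∈ X, shiftMap x ∈ X) (hx : x ∈ X) :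
    IsPrefixClosed (xiSet X x) := by
  intro g hg w hw
  obtain ⟨α, β, hgw, hα, hβ⟩ := (mem_xiSet_iff hS hx).1 hg
  rw [mem_xiSet_iff hS hx, toWord_mk_of_prefix hw]
  rw [hgw] at hw
  rcases List.prefix_append_cases hw with hw | ⟨q, hq, rfl⟩
  · obtain ⟨α₀, ⟨r, rfl⟩, rfl⟩ := List.prefix_map_iff.1 hw
    exact ⟨α₀, [], by simp [posWord, invRev], (pref_append_iff.1 hα).1,
      by simpa [cat_nil] using tail_mem hS hx _⟩
  · rw [invRev, posWord, ← List.reverse_reverse q, List.reverse_prefix, List.map_map,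
      List.suffix_map_iff] at hq
    obtain ⟨t, ht, hqt⟩ := hq
    refine ⟨α, t, ?_, hα, cat_mem_of_suffix hS hβ ht⟩
    rw [← List.reverse_reverse q, hqt]
    simp [posWord, invRev]

theorem mul_wd_mem_xiSet_iff (hS : ∀ x ∈ X, shiftMap x ∈ X) (hx : x ∈ X) {g : FreeGroup Λ}
    {α β : List Λ} (hg : g.toWord = posWord α ++ invRev (posWord β)) (hα : Pref α x)
    (hβ : cat β (tail x α.length) ∈ X) (γ : List Λ) :
    g * wd γ ∈ xiSet X x ↔ Pref γ (cat β (tail x α.length)) := by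
  obtain ⟨hgαβ, -⟩ := toWord_eq_posWord_append_invRev_iff.1 hg
  obtain ⟨c, β', γ', rfl, rfl, hne⟩ := List.exists_common_prefix β γ
  have hred : IsReduced (posWord α ++ invRev (posWord β')) := by
    refine (hg ▸ isReduced_toWord).infix ⟨[], invRev (posWord c), ?_⟩
    simp [posWord, invRev]
  have hgγ : g * wd (c ++ γ') = mk (posWord α ++ invRev (posWord β') ++ posWord γ') := by
    rw [hgαβ, wd_append, wd_append, ← mul_mk, ← wd_mul_inv_wd, ← wd_eq_mk]
    group
  rw [hgγ, mem_xiSet_iff hS hx,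
    toWord_mk_of_isReduced (isReduced_posWord_append_invRev_append_posWord hred hne),
    cat_append, pref_append_cat_iff]
  rcases eq_or_ne γ' [] with rfl | hγ'
  · exact iff_of_true
      ⟨α, β', by simp [posWord], hα, cat_mem_of_suffix hS hβ (List.suffix_append c β')⟩ (pref_nil _)
  rcases eq_or_ne β' [] with rfl | hβ'
  · rw [show posWord α ++ invRev (posWord []) ++ posWord γ' =
        posWord (α ++ γ') ++ invRev (posWord []) by simp [posWord, invRev], cat_nil]
    constructor
    · rintro ⟨α'', β'', h, hα'', -⟩
      obtain ⟨rfl, -⟩ := posWord_append_invRev_inj h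
      exact (pref_append_iff.1 hα'').2
    · intro h
      exact ⟨α ++ γ', [], rfl, pref_append_iff.2 ⟨hα, h⟩,
        by simpa [cat_nil] using tail_mem hS hx _⟩
  refine iff_of_false (fun ⟨_, _, h, _⟩ => posWord_append_invRev_append_posWord_ne hβ' hγ' _ _ h)
    fun h => ?_
  obtain ⟨b, β'', rfl⟩ := List.exists_cons_of_ne_nil hβ'
  obtain ⟨d, γ'', rfl⟩ := List.exists_cons_of_ne_nil hγ'
  exact hne b rfl d rfl (by simpa [cat_apply] using h 0 (Nat.succ_pos _))

theorem existsUnique_mul_of_mem_xiSet (hS : ∀ x ∈ X, shiftMap x ∈ X) (hx : x ∈ X)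
    {g : FreeGroup Λ} (hg : g ∈ xiSet X x) : ∃! a : Λ, g * of a ∈ xiSet X x := by
  obtain ⟨α, β, hgw, hα, hβ⟩ := (mem_xiSet_iff hS hx).1 hg
  have hstem := fun a : Λ => mul_wd_mem_xiSet_iff hS hx hgw hα hβ [a]
  simp only [wd, List.map_cons, List.map_nil, List.prod_cons, List.prod_nil, mul_one] at hstem
  simp only [hstem, Pref, List.length_singleton, Nat.lt_one_iff, List.getElem_singleton,
    forall_eq, existsUnique_eq']

theorem mem_language_of_mul_wd_mem_xiSet (hS : ∀ x ∈ X, shiftMap x ∈ X) (hx : x ∈ X)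
    {g : FreeGroup Λ} (hg : g ∈ xiSet X x) {γ : List Λ} (hgγ : g * wd γ ∈ xiSet X x) :
    γ ∈ Language X := by
  obtain ⟨α, β, hgw, hα, hβ⟩ := (mem_xiSet_iff hS hx).1 hg
  exact mem_language_of_pref hβ ((mul_wd_mem_xiSet_iff hS hx hgw hα hβ γ).1 hgγ)

end XiSet

section Spectrum

open FreeGroup

variable [DecidableEq Λ] {X : Set (ℕ → Λ)} {ξ : FreeGroup Λ → Bool}

theorem xiB_eq_true_iff {x : ℕ → Λ} {g : FreeGroup Λ} : xiB X x g = true ↔ g ∈ xiSet X x := by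
  simp [xiB, chi]

theorem omega_induction {ι : Type*} [Finite ι] (e : ι → FreeGroup Λ) {Q : (ι → Bool) → Prop}
    (hQ : ∀ x ∈ X, Q (xiB X x ∘ e)) (hξ : ξ ∈ Omega X) : Q (ξ ∘ e) := by
  have hclosed : IsClosed {ξ : FreeGroup Λ → Bool | Q (ξ ∘ e)} :=
    (isClosed_discrete {v | Q v}).preimage (continuous_pi fun i => continuous_apply (e i))
  exact closure_minimal (by rintro _ ⟨x, hx, rfl⟩; exact hQ x hx) hclosed hξ

theorem omega_apply_one (hS : ∀ x ∈ X, shiftMap x ∈ X) (hξ : ξ ∈ Omega X) : ξ 1 = true :=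
  omega_induction (fun _ : Unit => 1) (Q := fun v => v () = true)
    (fun _ hx => xiB_eq_true_iff.2 (one_mem_xiSet hS hx)) hξ

theorem omega_apply_of_norm_eq_add (hS : ∀ x ∈ X, shiftMap x ∈ X) (hξ : ξ ∈ Omega X)
    {g h k : FreeGroup Λ} (hg : ξ g = true) (hh : ξ h = true)
    (hk : (g⁻¹ * h).norm = (g⁻¹ * k).norm + (k⁻¹ * h).norm) : ξ k = true :=
  omega_induction ![g, h, k] (Q := fun v => v 0 = true → v 1 = true → v 2 = true)
    (fun _ hx hg hh => xiB_eq_true_iff.2 <| (xiSet_isPrefixClosed hS hx).mem_of_norm_eq_add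
      (xiB_eq_true_iff.1 hg) (xiB_eq_true_iff.1 hh) hk) hξ hg hh

theorem omega_existsUnique_mul_of [Finite Λ] (hS : ∀ x ∈ X, shiftMap x ∈ X) (hξ : ξ ∈ Omega X)
    {g : FreeGroup Λ} (hg : ξ g = true) : ∃! a : Λ, ξ (g * of a) = true :=
  omega_induction (fun o : Option Λ => o.elim g (g * of ·))
    (Q := fun v => v none = true → ∃! a, v (some a) = true)
    (fun _ hx hg => by
      simpa only [Function.comp_apply, Option.elim, xiB_eq_true_iff] using
        existsUnique_mul_of_mem_xiSet hS hx (xiB_eq_true_iff.1 hg))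
    hξ hg

theorem omega_mem_language (hS : ∀ x ∈ X, shiftMap x ∈ X) (hξ : ξ ∈ Omega X)
    {g : FreeGroup Λ} {γ : List Λ} (hg : ξ g = true) (hgγ : ξ (g * wd γ) = true) :
    γ ∈ Language X :=
  omega_induction (fun i : Bool => if i then g * wd γ else g)
    (Q := fun v => v false = true → v true = true → γ ∈ Language X)
    (fun _ hx hg hgγ => mem_language_of_mul_wd_mem_xiSet hS hx (xiB_eq_true_iff.1 hg)
      (xiB_eq_true_iff.1 hgγ)) hξ hg hgγ

theorem omega_eq_wd_mul_inv (hξ : ξ ∈ Omega X) {g : FreeGroup Λ} (hg : ξ g = true) :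
    ∃ α β : List Λ, g = wd α * (wd β)⁻¹ :=
  omega_induction (fun _ : Unit => g) (Q := fun v => v () = true → ∃ α β, g = wd α * (wd β)⁻¹)
    (fun _ _ hg => let ⟨α, β, h, _⟩ := xiB_eq_true_iff.1 hg; ⟨α, β, h⟩) hξ hg

end Spectrum

theorem omega_mem_properties_general {Λ : Type} [Fintype Λ] [DecidableEq Λ]
    [TopologicalSpace Λ]
    (X : Set (ℕ → Λ)) (hX : IsSubshift X)
    (ξ : FreeGroup Λ → Bool) (hξ : ξ ∈ Omega X) :
    ξ 1 = true ∧
    (∀ g h k : FreeGroup Λ, ξ g = true → ξ h = true →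
        FreeGroup.norm (g⁻¹ * h) = FreeGroup.norm (g⁻¹ * k) + FreeGroup.norm (k⁻¹ * h) →
        ξ k = true) ∧
    (∀ g : FreeGroup Λ, ξ g = true → ∃! a : Λ, ξ (g * FreeGroup.of a) = true) ∧
    (∀ (g : FreeGroup Λ) (α : List Λ), ξ g = true → ξ (g * wd α) = true →
        α ∈ Language X) ∧
    (∀ g : FreeGroup Λ, ξ g = true → ∃ α β : List Λ, g = wd α * (wd β)⁻¹) := by
  obtain ⟨-, -, hS⟩ := hX
  exact ⟨omega_apply_one hS hξ, fun _ _ _ => omega_apply_of_norm_eq_add hS hξ,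
    fun _ => omega_existsUnique_mul_of hS hξ, fun _ _ => omega_mem_language hS hξ,
    fun _ => omega_eq_wd_mul_inv hξ⟩

/-- basic properties of the elements of the spectrum `Ω_X`. -/
theorem omega_mem_properties {Λ : Type} [Fintype Λ] [Nonempty Λ] [DecidableEq Λ]
    [TopologicalSpace Λ] [DiscreteTopology Λ]
    (X : Set (ℕ → Λ)) (hX : IsSubshift X)
    (ξ : FreeGroup Λ → Bool) (hξ : ξ ∈ Omega X) :
    ξ 1 = true ∧
    (∀ g h k : FreeGroup Λ, ξ g = true → ξ h = true →
        FreeGroup.norm (g⁻¹ * h) = FreeGroup.norm (g⁻¹ * k) + FreeGroup.norm (k⁻¹ * h) →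
        ξ k = true) ∧
    (∀ g : FreeGroup Λ, ξ g = true → ∃! a : Λ, ξ (g * FreeGroup.of a) = true) ∧
    (∀ (g : FreeGroup Λ) (α : List Λ), ξ g = true → ξ (g * wd α) = true →
        α ∈ Language X) ∧
    (∀ g : FreeGroup Λ, ξ g = true → ∃ α β : List Λ, g = wd α * (wd β)⁻¹) :=
  omega_mem_properties_general X hX ξ hξ

end SubshiftPaper
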